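/- Fix reals λ > 0, μ_1 > 0, μ_2 > 0, and take N = 2, μ_0 = λ, μ_3 = 0. With the preemptive reach probability P(a,b,a',b') defined recursively by: P(a,b,a',b') = 1 if a = a' and b = b'; P(a,b,a',b') = 0 if a > a' or b > b' or a ≤ b; and otherwise P(a,b,a',b') = (μ_a/(μ_a+μ_b))·P(a+1,b,a',b') + (μ_b/(μ_a+μ_b))·P(a,b+1,a',b'), define ζ_0 = P(1,0,2,0)·μ_2/(μ_2+λ) and ζ_1 = P(1,0,2,1)·μ_2/(μ_2+μ_1). Then ζ_0/(ζ_0+ζ_1) = (μ_1+μ_2)/(λ+μ_1+μ_2) and ζ_1/(ζ_0+ζ_1) = λ/(λ+μ_1+μ_2). -/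

import Mathlib

/-- Preemptive reach probability `P(a, b, a', b')` from the paper's Lemma 2:
`P(a,b,a',b') = 1` if `a = a'` and `b = b'`; `P(a,b,a',b') = 0` if `a > a'` or `b > b'` or
`a ≤ b`; otherwise
`P(a,b,a',b') = (μ_a/(μ_a+μ_b))·P(a+1,b,a',b') + (μ_b/(μ_a+μ_b))·P(a,b+1,a',b')`. -/
noncomputable def reachP (μ : ℕ → ℝ) (a b a' b' : ℕ) : ℝ :=
  if a = a' ∧ b = b' then 1
  else if a > a' ∨ b > b' ∨ a ≤ b then 0
  else (μ a / (μ a + μ b)) * reachP μ (a + 1) b a' b'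
    + (μ b / (μ a + μ b)) * reachP μ a (b + 1) a' b'
termination_by (a' + b') - (a + b)
decreasing_by all_goals omega

/-! Unfolding the recursion, `P(1,0,2,0) = μ₁/(μ₁+λ)` and
`P(1,0,2,1) = μ₁/(μ₁+λ) · λ/(μ₂+λ)`, so `ζ₀ = c (μ₁+μ₂)` and `ζ₁ = c λ` for the common factor
`c = μ₁μ₂ / ((μ₁+λ)(μ₂+λ)(μ₁+μ₂)) > 0`, which cancels from both ratios. -/

section reachP

variable (μ : ℕ → ℝ) {a b a' b' : ℕ}

theorem reachP_self (a b : ℕ) : reachP μ a b a b = 1 := by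
  rw [reachP]
  simp

theorem reachP_of_lt_fst (h : a' < a) : reachP μ a b a' b' = 0 := by
  rw [reachP, if_neg (by omega), if_pos (by omega)]

theorem reachP_of_lt_snd (h : b' < b) : reachP μ a b a' b' = 0 := by
  rw [reachP, if_neg (by omega), if_pos (by omega)]

theorem reachP_of_le (hab : a ≤ b) (hne : ¬(a = a' ∧ b = b')) : reachP μ a b a' b' = 0 := by
  rw [reachP, if_neg hne, if_pos (by omega)]

theorem reachP_step (hne : ¬(a = a' ∧ b = b')) (ha : a ≤ a') (hb : b ≤ b') (hba : b < a) :
    reachP μ a b a' b' = μ a / (μ a + μ b) * reachP μ (a + 1) b a' b'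
      + μ b / (μ a + μ b) * reachP μ a (b + 1) a' b' := by
  rw [reachP, if_neg hne, if_neg (by omega)]

theorem reachP_one_zero_two_zero : reachP μ 1 0 2 0 = μ 1 / (μ 1 + μ 0) := by
  rw [reachP_step μ (by omega) (by omega) (by omega) (by omega), reachP_self,
    reachP_of_lt_snd μ (by omega)]
  ring

theorem reachP_two_zero_two_one : reachP μ 2 0 2 1 = μ 0 / (μ 2 + μ 0) := by
  rw [reachP_step μ (by omega) (by omega) (by omega) (by omega), reachP_of_lt_fst μ (by omega),
    reachP_self]
  ring

theorem reachP_one_zero_two_one :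
    reachP μ 1 0 2 1 = μ 1 / (μ 1 + μ 0) * (μ 0 / (μ 2 + μ 0)) := by
  rw [reachP_step μ (by omega) (by omega) (by omega) (by omega), reachP_two_zero_two_one,
    reachP_of_le μ (by omega) (by omega)]
  ring

end reachP

theorem psi_prob_two_servers_general (lam : ℝ) (hlam : 0 < lam) (μ : ℕ → ℝ) (hμ0 : μ 0 = lam)
    (hμ1 : 0 < μ 1) (hμ2 : 0 < μ 2) (ζ0 ζ1 : ℝ)
    (hζ0 : ζ0 = reachP μ 1 0 2 0 * (μ 2 / (μ 2 + lam)))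
    (hζ1 : ζ1 = reachP μ 1 0 2 1 * (μ 2 / (μ 2 + μ 1))) :
    ζ0 / (ζ0 + ζ1) = (μ 1 + μ 2) / (lam + μ 1 + μ 2)
    ∧ ζ1 / (ζ0 + ζ1) = lam / (lam + μ 1 + μ 2) := by
  set c := μ 1 * μ 2 / ((μ 1 + lam) * (μ 2 + lam) * (μ 1 + μ 2)) with hc_def
  have hc : c ≠ 0 := by positivity
  have hζ0' : ζ0 = c * (μ 1 + μ 2) := by
    rw [hζ0, reachP_one_zero_two_zero, hμ0, hc_def]
    field_simp
  have hζ1' : ζ1 = c * lam := by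
    rw [hζ1, reachP_one_zero_two_one, hμ0, hc_def]
    field_simp
    ring
  have hsum : ζ0 + ζ1 = c * (lam + μ 1 + μ 2) := by
    rw [hζ0', hζ1']
    ring
  rw [hsum, hζ0', hζ1', mul_div_mul_left _ _ hc, mul_div_mul_left _ _ hc]
  exact ⟨rfl, rfl⟩

/-- For `N = 2` preemptive servers with `μ 0 = λ > 0`, `μ 1, μ 2 > 0`, `μ 3 = 0`, and
`ζ_0 = P(1,0,2,0)·μ_2/(μ_2+λ)`, `ζ_1 = P(1,0,2,1)·μ_2/(μ_2+μ_1)`, one has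
`ζ_0/(ζ_0+ζ_1) = (μ_1+μ_2)/(λ+μ_1+μ_2)` and `ζ_1/(ζ_0+ζ_1) = λ/(λ+μ_1+μ_2)`. -/
theorem psi_prob_two_servers (lam : ℝ) (hlam : 0 < lam) (μ : ℕ → ℝ) (hμ0 : μ 0 = lam)
    (hμ1 : 0 < μ 1) (hμ2 : 0 < μ 2) (hμ3 : μ 3 = 0) (ζ0 ζ1 : ℝ)
    (hζ0 : ζ0 = reachP μ 1 0 2 0 * (μ 2 / (μ 2 + lam)))
    (hζ1 : ζ1 = reachP μ 1 0 2 1 * (μ 2 / (μ 2 + μ 1))) :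
    ζ0 / (ζ0 + ζ1) = (μ 1 + μ 2) / (lam + μ 1 + μ 2)
    ∧ ζ1 / (ζ0 + ζ1) = lam / (lam + μ 1 + μ 2) :=
  psi_prob_two_servers_general lam hlam μ hμ0 hμ1 hμ2 ζ0 ζ1 hζ0 hζ1
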